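/- Let R > 0, let μ be a probability measure on ℝ supported in [−R, R], let δ > 0, and let p_δ be the density of μ * γ_δ. Then ∫_{−R}^{R} (1/p_δ(t)) dt ≤ 8√(2π) · (δ^{3/2} R / (4R² + δ)) · exp(2R²/δ). -/

import Mathlib

open MeasureTheory Real

/-- Density of the convolution μ * γ_δ on ℝ:
p_δ(t) = ∫ (2πδ)^{-1/2} exp(−(t−s)²/(2δ)) dμ(s). -/
noncomputable def pdelta (δ : ℝ) (μ : Measure ℝ) (t : ℝ) : ℝ :=
  ∫ s, (Real.sqrt (2 * π * δ))⁻¹ * Real.exp (-((t - s) ^ 2) / (2 * δ)) ∂μ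

/-!
Every `s ∈ [-R, R]` satisfies `(t - s)² ≤ max ((t + R)², (R - t)²)`, so
`1 / p_δ(t) ≤ √(2πδ) (exp ((t + R)² / 2δ) + exp ((R - t)² / 2δ))`. After the substitutions
`u = t + R` and `u = R - t` both terms integrate over `[-R, R]` to `∫₀^{2R} exp (u² / 2δ) du`,
and this erfi-type integral is at most `2 G(2R)` for `G(u) = δu / (u² + δ) · exp (u² / 2δ)`,
because `G' = exp (u² / 2δ) (u⁴ + δ²) / (u² + δ)² ≥ exp (u² / 2δ) / 2`.
-/

open Set

lemma intervalIntegral_comp_add_add_comp_sub {f : ℝ → ℝ} (hf : Continuous f) (R : ℝ) :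
    ∫ t in (-R)..R, (f (t + R) + f (R - t)) = 2 * ∫ u in (0)..2 * R, f u := by
  have hright : IntervalIntegrable (fun t => f (t + R)) volume (-R) R :=
    (hf.comp (continuous_add_const R)).intervalIntegrable _ _
  have hleft : IntervalIntegrable (fun t => f (R - t)) volume (-R) R :=
    (hf.comp (continuous_sub_left R)).intervalIntegrable _ _
  rw [intervalIntegral.integral_add hright hleft, intervalIntegral.integral_comp_add_right f,
    intervalIntegral.integral_comp_sub_left f]
  ring_nf

lemma sq_sub_le_max_of_mem_Icc {R s : ℝ} (hs : s ∈ Icc (-R) R) (t : ℝ) :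
    (t - s) ^ 2 ≤ max ((t + R) ^ 2) ((R - t) ^ 2) := by
  obtain ⟨hRs, hsR⟩ := hs
  rcases le_total 0 t with ht | ht
  · exact le_max_of_le_left (by nlinarith [mul_nonneg (neg_le_iff_add_nonneg.1 hRs) ht])
  · exact le_max_of_le_right (by nlinarith [mul_nonneg (sub_nonneg.2 hsR) (neg_nonneg.2 ht)])

section GaussianKernel

variable {δ : ℝ}

lemma gaussian_kernel_le (hδ : 0 ≤ δ) (x : ℝ) :
    (√(2 * π * δ))⁻¹ * exp (-(x ^ 2) / (2 * δ)) ≤ (√(2 * π * δ))⁻¹ :=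
  mul_le_of_le_one_right (by positivity) <| exp_le_one_iff.2 <|
    div_nonpos_of_nonpos_of_nonneg (neg_nonpos.2 (sq_nonneg x)) (by positivity)

lemma integrable_gaussian_kernel (hδ : 0 ≤ δ) (μ : Measure ℝ) [IsFiniteMeasure μ] (t : ℝ) :
    Integrable (fun s => (√(2 * π * δ))⁻¹ * exp (-((t - s) ^ 2) / (2 * δ))) μ :=
  (integrable_const (√(2 * π * δ))⁻¹).mono' (by fun_prop) <| ae_of_all _ fun s => by
    rw [norm_of_nonneg (by positivity)]
    exact gaussian_kernel_le hδ (t - s)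

lemma pdelta_nonneg (μ : Measure ℝ) (t : ℝ) : 0 ≤ pdelta δ μ t :=
  integral_nonneg fun _ => by positivity

variable {R : ℝ} {μ : Measure ℝ} [IsProbabilityMeasure μ]

lemma exp_neg_max_le_pdelta (hδ : 0 ≤ δ) (hsupp : ∀ᵐ s ∂μ, s ∈ Icc (-R) R) (t : ℝ) :
    (√(2 * π * δ))⁻¹ * exp (-max ((t + R) ^ 2) ((R - t) ^ 2) / (2 * δ)) ≤ pdelta δ μ t := by
  have hpointwise : ∀ᵐ s ∂μ, (√(2 * π * δ))⁻¹ * exp (-max ((t + R) ^ 2) ((R - t) ^ 2) / (2 * δ))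
      ≤ (√(2 * π * δ))⁻¹ * exp (-((t - s) ^ 2) / (2 * δ)) := by
    filter_upwards [hsupp] with s hs
    gcongr
    exact sq_sub_le_max_of_mem_Icc hs t
  simpa [pdelta] using
    integral_mono_ae (integrable_const _) (integrable_gaussian_kernel hδ μ t) hpointwise

lemma inv_pdelta_le (hδ : 0 < δ) (hsupp : ∀ᵐ s ∂μ, s ∈ Icc (-R) R) (t : ℝ) :
    (pdelta δ μ t)⁻¹ ≤
      √(2 * π * δ) * (exp ((t + R) ^ 2 / (2 * δ)) + exp ((R - t) ^ 2 / (2 * δ))) :=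
  calc (pdelta δ μ t)⁻¹
      ≤ ((√(2 * π * δ))⁻¹ * exp (-max ((t + R) ^ 2) ((R - t) ^ 2) / (2 * δ)))⁻¹ :=
        inv_anti₀ (by positivity) (exp_neg_max_le_pdelta hδ.le hsupp t)
    _ = √(2 * π * δ) * max (exp ((t + R) ^ 2 / (2 * δ))) (exp ((R - t) ^ 2 / (2 * δ))) := by
        rw [mul_inv, inv_inv, ← exp_neg, neg_div, neg_neg, ← max_div_div_right (by positivity),
          exp_monotone.map_max]
    _ ≤ √(2 * π * δ) * (exp ((t + R) ^ 2 / (2 * δ)) + exp ((R - t) ^ 2 / (2 * δ))) := by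
        gcongr
        exact max_le_add_of_nonneg (exp_nonneg _) (exp_nonneg _)

end GaussianKernel

section ExpSqIntegral

variable {δ : ℝ}

noncomputable def expSqMajorant (δ u : ℝ) : ℝ :=
  δ * u / (u ^ 2 + δ) * exp (u ^ 2 / (2 * δ))

lemma hasDerivAt_expSqMajorant (hδ : 0 < δ) (u : ℝ) :
    HasDerivAt (expSqMajorant δ)
      (exp (u ^ 2 / (2 * δ)) * (u ^ 4 + δ ^ 2) / (u ^ 2 + δ) ^ 2) u := by
  have hquot : HasDerivAt (fun u : ℝ => δ * u / (u ^ 2 + δ))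
      ((δ * (u ^ 2 + δ) - δ * u * (2 * u)) / (u ^ 2 + δ) ^ 2) u := by
    have hden : HasDerivAt (fun u : ℝ => u ^ 2 + δ) (2 * u) u := by
      simpa using (hasDerivAt_pow 2 u).add_const δ
    have hnum : HasDerivAt (fun u : ℝ => δ * u) δ u := by
      simpa using (hasDerivAt_id u).const_mul δ
    exact hnum.div hden (by positivity)
  have hexp : HasDerivAt (fun u : ℝ => exp (u ^ 2 / (2 * δ)))
      (exp (u ^ 2 / (2 * δ)) * (u / δ)) u := by
    refine ((hasDerivAt_pow 2 u).div_const (2 * δ)).exp.congr_deriv ?_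
    field_simp
    ring
  refine (hquot.mul hexp).congr_deriv ?_
  field_simp
  ring

lemma exp_sq_div_le_two_mul (hδ : 0 < δ) (u : ℝ) :
    exp (u ^ 2 / (2 * δ)) ≤ 2 * (exp (u ^ 2 / (2 * δ)) * (u ^ 4 + δ ^ 2) / (u ^ 2 + δ) ^ 2) := by
  have hratio : 1 ≤ 2 * (u ^ 4 + δ ^ 2) / (u ^ 2 + δ) ^ 2 := by
    rw [one_le_div (by positivity)]
    nlinarith [sq_nonneg (u ^ 2 - δ)]
  calc exp (u ^ 2 / (2 * δ)) ≤ exp (u ^ 2 / (2 * δ)) * (2 * (u ^ 4 + δ ^ 2) / (u ^ 2 + δ) ^ 2) :=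
        le_mul_of_one_le_right (exp_nonneg _) hratio
    _ = _ := by ring

lemma integral_exp_sq_div_le (hδ : 0 < δ) {a : ℝ} (ha : 0 ≤ a) :
    ∫ u in (0)..a, exp (u ^ 2 / (2 * δ)) ≤ 2 * expSqMajorant δ a := by
  set G' : ℝ → ℝ := fun u => exp (u ^ 2 / (2 * δ)) * (u ^ 4 + δ ^ 2) / (u ^ 2 + δ) ^ 2
  have hG' : Continuous G' := by
    refine Continuous.div (by fun_prop) (by fun_prop) fun u => by positivity
  have hderiv : ∀ u, HasDerivAt (expSqMajorant δ) (G' u) u := hasDerivAt_expSqMajorant hδ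
  calc ∫ u in (0)..a, exp (u ^ 2 / (2 * δ))
      ≤ ∫ u in (0)..a, 2 * G' u :=
        intervalIntegral.integral_mono_on ha ((by fun_prop : Continuous fun u : ℝ =>
          exp (u ^ 2 / (2 * δ))).intervalIntegrable _ _)
          ((continuous_const.mul hG').intervalIntegrable _ _) fun u _ => exp_sq_div_le_two_mul hδ u
    _ = 2 * (expSqMajorant δ a - expSqMajorant δ 0) := by
        rw [intervalIntegral.integral_const_mul, intervalIntegral.integral_eq_sub_of_hasDerivAt
          (fun u _ => hderiv u) (hG'.intervalIntegrable _ _)]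
    _ = 2 * expSqMajorant δ a := by simp [expSqMajorant]

lemma sqrt_mul_expSqMajorant_two_mul (hδ : 0 < δ) (R : ℝ) :
    √(2 * π * δ) * (4 * expSqMajorant δ (2 * R)) =
      8 * √(2 * π) * (δ ^ ((3 : ℝ) / 2) * R / (4 * R ^ 2 + δ)) * exp (2 * R ^ 2 / δ) := by
  have hrpow : δ ^ ((3 : ℝ) / 2) = δ * √δ := by
    rw [show (3 : ℝ) / 2 = 1 + 1 / 2 by norm_num, rpow_add hδ, rpow_one, sqrt_eq_rpow]
  have hexp : (2 * R) ^ 2 / (2 * δ) = 2 * R ^ 2 / δ := by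
    field_simp
  rw [expSqMajorant, hexp, hrpow, sqrt_mul (by positivity)]
  field_simp
  ring

end ExpSqIntegral

theorem stmt12 (R δ : ℝ) (hR : 0 < R) (hδ : 0 < δ)
    (μ : Measure ℝ) [IsProbabilityMeasure μ] (hsupp : μ (Set.Icc (-R) R)ᶜ = 0) :
    ∫ t in Set.Icc (-R) R, (pdelta δ μ t)⁻¹ ≤
      8 * Real.sqrt (2 * π) * (δ ^ ((3 : ℝ) / 2) * R / (4 * R ^ 2 + δ)) *
        Real.exp (2 * R ^ 2 / δ) := by
  set E : ℝ → ℝ := fun u => exp (u ^ 2 / (2 * δ))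
  calc ∫ t in Icc (-R) R, (pdelta δ μ t)⁻¹
      ≤ ∫ t in Icc (-R) R, √(2 * π * δ) * (E (t + R) + E (R - t)) :=
        integral_mono_of_nonneg (ae_of_all _ fun t => inv_nonneg.2 (pdelta_nonneg μ t))
          (Continuous.integrableOn_Icc (by fun_prop))
          (ae_of_all _ fun t => inv_pdelta_le hδ (ae_iff.2 hsupp) t)
    _ = √(2 * π * δ) * (2 * ∫ u in (0)..2 * R, E u) := by
        rw [integral_Icc_eq_integral_Ioc, ← intervalIntegral.integral_of_le (by linarith),
          intervalIntegral.integral_const_mul,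
          intervalIntegral_comp_add_add_comp_sub (by fun_prop : Continuous E)]
    _ ≤ √(2 * π * δ) * (2 * (2 * expSqMajorant δ (2 * R))) := by
        gcongr
        exact integral_exp_sq_div_le hδ (by positivity)
    _ = _ := by
        rw [← sqrt_mul_expSqMajorant_two_mul hδ R]
        ring
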